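/- Let b, d', u ∈ W and α ∈ A. If α T_b T_{d'} T_u ∈ H_{<0}, then α T_{b'} T_{d'} T_{u'} ∈ H_{<0} for all b', u' ∈ W with b'⁻¹ ≤_D b⁻¹ and u' ≤_D u, where ≤_D is the Duflo order: x ≤_D y iff l(x⁻¹ y) = l(y) − l(x). -/

import Mathlib

open scoped Classical TensorProduct

noncomputable section

namespace KL

variable (Γ : Type) [AddCommGroup Γ] [LinearOrder Γ] [IsOrderedAddMonoid Γ]

/-- The group ring `A = ℤ[Γ]`. -/
abbrev A := AddMonoidAlgebra ℤ Γ

variable {Γ}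

/-- The basis element `q^γ` of `A`. -/
def qe (γ : Γ) : A Γ := AddMonoidAlgebra.single γ 1

/-- `A_{<0}`: the ℤ-span of the `q^γ` with `γ < 0`, i.e. elements supported in negative degrees. -/
def Alt0 (Γ : Type) [AddCommGroup Γ] [LinearOrder Γ] [IsOrderedAddMonoid Γ] : Set (A Γ) :=
  {a : A Γ | ∀ γ ∈ a.coeff.support, γ < 0}

/-- The degree of an element of `A` (`⊥` for `0`). -/
def adeg (a : A Γ) : WithBot Γ := a.coeff.support.max

variable {B W : Type} [Group W] {M : CoxeterMatrix B}
variable {H : Type} [Ring H]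

/-- Bundled data of a Coxeter system `(W,S)` together with a positive weight function `L`,
its Hecke algebra `H` over `A = ℤ[Γ]` with standard basis `T`, the bar involution, and the
Kazhdan-Lusztig basis `C`. -/
structure KLData (M : CoxeterMatrix B) (W : Type) [Group W] (Γ : Type)
    [AddCommGroup Γ] [LinearOrder Γ] [IsOrderedAddMonoid Γ] (H : Type) [Ring H] [Algebra (A Γ) H] where
  /-- the Coxeter system -/
  cs : CoxeterSystem M W
  /-- the weight function -/
  L : W → Γ
  L_add : ∀ w w' : W, cs.length (w * w') = cs.length w + cs.length w' →
    L (w * w') = L w + L w'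
  L_pos : ∀ w : W, w ≠ 1 → 0 < L w
  /-- the standard basis `T_w` of the Hecke algebra -/
  bT : Module.Basis W (A Γ) H
  T_mul : ∀ w w' : W, cs.length (w * w') = cs.length w + cs.length w' →
    bT w * bT w' = bT (w * w')
  T_quad : ∀ i : B,
    (bT (cs.simple i) + algebraMap (A Γ) H (qe (-(L (cs.simple i))))) *
      (bT (cs.simple i) - algebraMap (A Γ) H (qe (L (cs.simple i)))) = 0
  /-- the bar involution -/
  bar : H →+* H
  bar_bar : ∀ h : H, bar (bar h) = h
  bar_q : ∀ γ : Γ, bar (algebraMap (A Γ) H (qe γ)) = algebraMap (A Γ) H (qe (-γ))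
  bar_T : ∀ w : W, bar (bT w) * bT w⁻¹ = 1
  bar_T' : ∀ w : W, bT w⁻¹ * bar (bT w) = 1
  /-- the Kazhdan-Lusztig basis `C_w` -/
  bC : Module.Basis W (A Γ) H
  bar_C : ∀ w : W, bar (bC w) = bC w
  C_mod : ∀ w v : W, bT.repr (bC w - bT w) v ∈ Alt0 Γ

namespace KLData

variable [Algebra (A Γ) H] (d : KLData M W Γ H)

/-- `T_w` -/
def T (w : W) : H := d.bT w

/-- `C_w` -/
def C (w : W) : H := d.bC w

/-- `H_{<0} = ⊕_w A_{<0} T_w`. -/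
def Hlt0 : Set H := {h : H | ∀ w : W, d.bT.repr h w ∈ Alt0 Γ}

/-- The structure constants `h_{x,y,z}` of the KL basis. -/
def hk (x y z : W) : A Γ := d.bC.repr (d.C x * d.C y) z

/-- One step of the preorder `≤_L` : `x` appears in `C_z C_y` for some `z`. -/
def leLstep (x y : W) : Prop := ∃ z : W, d.bC.repr (d.C z * d.C y) x ≠ 0

/-- The preorder `≤_L`. -/
def leL : W → W → Prop := Relation.ReflTransGen d.leLstep

/-- `x ~_L y` -/
def simL (x y : W) : Prop := d.leL x y ∧ d.leL y x

/-- `x ≤_R y` -/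
def leR (x y : W) : Prop := d.leL x⁻¹ y⁻¹

/-- `x ~_R y` -/
def simR (x y : W) : Prop := d.simL x⁻¹ y⁻¹

/-- The preorder `≤_LR`, generated by `≤_L` and `≤_R`. -/
def leLR : W → W → Prop :=
  Relation.ReflTransGen (fun x y => d.leLstep x y ∨ d.leLstep x⁻¹ y⁻¹)

/-- `x ~_LR y` -/
def simLR (x y : W) : Prop := d.leLR x y ∧ d.leLR y x

/-- left cells -/
def IsLeftCell (Θ : Set W) : Prop := ∃ x : W, Θ = {y | d.simL x y}

/-- right cells -/
def IsRightCell (Φ : Set W) : Prop := ∃ x : W, Φ = {y | d.simR x y}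

/-- two-sided cells -/
def IsTwoSidedCell (c : Set W) : Prop := ∃ x : W, c = {y | d.simLR x y}

/-- `z < c` for a two-sided cell `c`. -/
def ltc (c : Set W) (z : W) : Prop := z ∉ c ∧ ∀ w ∈ c, d.leLR z w

/-- `z ≤ c` for a two-sided cell `c`. -/
def lec (c : Set W) (z : W) : Prop := ∀ w ∈ c, d.leLR z w

/-- The ideal `H_{<c}`, spanned by the `C_z` with `z < c`. -/
def Hltc (c : Set W) : Submodule (A Γ) H :=
  Submodule.span (A Γ) (d.C '' {z : W | d.ltc c z})

/-- Bruhat order on `W`. -/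
def bruhatLE : W → W → Prop :=
  Relation.ReflTransGen (fun x y => ∃ t : W, d.cs.IsReflection t ∧ y = x * t ∧
    d.cs.length x < d.cs.length y)

/-- Strict Bruhat order on `W`. -/
def bruhatLT (x y : W) : Prop := d.bruhatLE x y ∧ x ≠ y

/-- Duflo order: `x ≤_D y` iff `l(x⁻¹y) = l(y) - l(x)`. -/
def dufloLE (x y : W) : Prop :=
  d.cs.length x + d.cs.length (x⁻¹ * y) = d.cs.length y

/-- The `A`-linear anti-automorphism `♭` of `H` with `T_w ↦ T_{w⁻¹}`. -/
def flat : H →ₗ[A Γ] H := d.bT.constr ℕ (fun w => d.bT w⁻¹)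

/-- `P_{e,z}` : the coefficient of `T_e` in `C_z`. -/
def Pel (z : W) : A Γ := d.bT.repr (d.C z) 1

/-- `Δ(z)`, defined by `P_{e,z} = n_z q^{-Δ(z)} + lower degree terms`. -/
def Del (z : W) : Γ := -(WithBot.unbotD 0 (d.Pel z).coeff.support.max)

/-- `n_z`, defined by `P_{e,z} = n_z q^{-Δ(z)} + lower degree terms`. -/
def nz (z : W) : ℤ := (d.Pel z).coeff (-(d.Del z))

/-- `af : W → Γ` is Lusztig's `a`-function iff for each `z`, `af z` is the (attained)
supremum of the degrees of the `h_{x,y,z}`. -/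
def IsAFunction (af : W → Γ) : Prop :=
  ∀ z : W, (∀ x y : W, adeg (d.hk x y z) ≤ (af z : WithBot Γ)) ∧
    (∃ x y : W, adeg (d.hk x y z) = (af z : WithBot Γ))

/-- `γ_{x,y,z}` : the coefficient of `q^{a(z⁻¹)}` in `h_{x,y,z⁻¹}`. -/
def gam (af : W → Γ) (x y z : W) : ℤ := (d.hk x y z⁻¹).coeff (af z⁻¹)

/-- The set `𝒟 = {z | a(z) = Δ(z)}`. -/
def Dset (af : W → Γ) : Set W := {z : W | af z = d.Del z}

end KLData

variable [Algebra (A Γ) H]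

/-- Assumption (*): a two-sided cell `c` equipped with subsets `D ⊆ c` and
`B_d, U_d ⊆ W` (`d ∈ D`) satisfying conditions (ia)-(iv). -/
structure CellDecomp (d : KLData M W Γ H) (c : Set W) where
  isCell : d.IsTwoSidedCell c
  D : Set W
  Bd : W → Set W
  Ud : W → Set W
  D_sub : D ⊆ c
  -- (ia) : c = c⁻¹ = ⊔_{d ∈ D} B_d d U_d (disjoint union)
  c_inv : ∀ w : W, w ∈ c ↔ w⁻¹ ∈ c
  c_eq : c = ⋃ d0 ∈ D, {w : W | ∃ b ∈ Bd d0, ∃ u ∈ Ud d0, w = b * d0 * u}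
  disj : ∀ d1 ∈ D, ∀ d2 ∈ D, d1 ≠ d2 →
    Disjoint {w : W | ∃ b ∈ Bd d1, ∃ u ∈ Ud d1, w = b * d1 * u}
             {w : W | ∃ b ∈ Bd d2, ∃ u ∈ Ud d2, w = b * d2 * u}
  -- (ib)
  len_add : ∀ d0 ∈ D, ∀ b ∈ Bd d0, ∀ u ∈ Ud d0,
    d.cs.length (b * d0 * u) = d.cs.length b + d.cs.length d0 + d.cs.length u
  -- (ic)
  one_mem_B : ∀ d0 ∈ D, (1 : W) ∈ Bd d0
  one_mem_U : ∀ d0 ∈ D, (1 : W) ∈ Ud d0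
  Binv_sub_U : ∀ d0 ∈ D, ∀ b ∈ Bd d0, b⁻¹ ∈ Ud d0
  -- (id)
  not_mem_c : ∀ d0 ∈ D, ∀ w : W, w ∉ Ud d0 →
    (∀ i : B, d.bruhatLE (d.cs.simple i) d0 →
      d.cs.length (d.cs.simple i * w) = d.cs.length w + 1) → d0 * w ∉ c
  -- (iia) : each d ∈ D is an involution in a finite parabolic subgroup
  d_inv : ∀ d0 ∈ D, d0 * d0 = 1 ∧ d0 ≠ 1
  d_parabolic : ∀ d0 ∈ D, ∃ I : Set B,
    (Subgroup.closure (d.cs.simple '' I) : Set W).Finite ∧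
    d0 ∈ Subgroup.closure (d.cs.simple '' I)
  s_len : ∀ d0 ∈ D, ∀ i : B, d.bruhatLE (d.cs.simple i) d0 →
    ∀ u ∈ Ud d0, d.cs.length (d.cs.simple i * u) = d.cs.length u + 1
  -- (iib)
  TsC : ∀ d0 ∈ D, ∀ i : B, d.bruhatLE (d.cs.simple i) d0 →
    ∃ a : A Γ, d.T (d.cs.simple i) * d.C d0 - a • d.C d0 ∈ d.Hltc c
  -- (iic)
  h_ne : ∀ d0 ∈ D, d.hk d0 d0 d0 ≠ 0
  -- (iii)
  dU_rightCell : ∀ d0 ∈ D, d.IsRightCell {w : W | ∃ u ∈ Ud d0, w = d0 * u}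
  -- (iv)
  TCT : ∀ d0 ∈ D, ∀ b ∈ Bd d0, ∀ u ∈ Ud d0,
    ∃ h0 ∈ d.Hlt0, ∃ h1 ∈ d.Hltc c,
      d.T b * d.C d0 * d.T u - d.T (b * d0 * u) = h0 + h1

namespace CellDecomp

variable {d : KLData M W Γ H} {c : Set W} (cd : CellDecomp d c)

/-- `F` is the element `F_w` : `F = T_w + Σ_{y ∈ U_d, y < w} p_{y,w} T_y` with
`p_{y,w} ∈ A_{<0}`, and `C_d F ≡ C_{dw} mod H_{<c}`. -/
def IsF (d0 w : W) (F : H) : Prop :=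
  (d.bT.repr F w = 1 ∧
    ∀ y : W, y ≠ w → d.bT.repr F y ≠ 0 →
      y ∈ cd.Ud d0 ∧ d.bruhatLT y w ∧ d.bT.repr F y ∈ Alt0 Γ) ∧
  d.C d0 * F - d.C (d0 * w) ∈ d.Hltc c

/-- The right cell `Φ_{b,d} = b d U_d`. -/
def Phi (b d0 : W) : Set W := {x : W | ∃ u ∈ cd.Ud d0, x = b * d0 * u}

/-- The left cell `Θ_{b,d} = Φ_{b,d}⁻¹`. -/
def Theta (b d0 : W) : Set W := {x : W | ∃ u ∈ cd.Ud d0, x = u⁻¹ * d0 * b⁻¹}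

end CellDecomp

/-- The Coxeter matrix of affine type C̃2: generators `s0 s1 s2`,
`(s0 s1)⁴ = (s1 s2)⁴ = (s0 s2)² = 1`. -/
def Ct2 : CoxeterMatrix (Fin 3) where
  M := !![1, 4, 2; 4, 1, 4; 2, 4, 1]
  isSymm := by decide
  diagonal := by decide
  off_diagonal := by intro i i' h; fin_cases i <;> fin_cases i' <;> simp_all

/-- The Coxeter matrix of affine type G̃2: generators `s0 s1 s2`,
`(s0 s1)³ = (s1 s2)⁶ = (s0 s2)² = 1`. -/
def Gt2 : CoxeterMatrix (Fin 3) where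
  M := !![1, 3, 2; 3, 1, 6; 2, 6, 1]
  isSymm := by decide
  diagonal := by decide
  off_diagonal := by intro i i' h; fin_cases i <;> fin_cases i' <;> simp_all

/-- `ξ_γ = q^γ - q^{-γ}`. -/
def xi (γ : Γ) : A Γ := qe γ - qe (-γ)

/-- `η_γ = q^γ + q^{-γ}`. -/
def eta (γ : Γ) : A Γ := qe γ + qe (-γ)


namespace KLData

variable [Algebra (A Γ) H] (d : KLData M W Γ H)

/-- The free `A ⊗_ℤ A`-module with basis `{E_w : w ∈ c}`. -/
abbrev Emod (Γ : Type) [AddCommGroup Γ] [LinearOrder Γ] [IsOrderedAddMonoid Γ] {W : Type} (c : Set W) :=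
  ↥c →₀ (A Γ ⊗[ℤ] A Γ)

/-- `C_x ⬝ E_w = Σ_{z ∈ c} (h_{x,w,z} ⊗ 1) E_z`. -/
def lactB (c : Set W) (x : W) (w : ↥c) : Emod Γ c :=
  Finsupp.mapRange (fun a => a ⊗ₜ[ℤ] (1 : A Γ)) (by simp)
    ((d.bC.repr (d.C x * d.C (w : W))).subtypeDomain (· ∈ c))

/-- The left action of `C_x` on `E`, extended `(A ⊗ A)`-linearly from the basis. -/
def lact (c : Set W) (x : W) (v : Emod Γ c) : Emod Γ c :=
  v.sum fun w t => t • d.lactB c x w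

/-- `E_w ⬝ C_y = Σ_{z ∈ c} (1 ⊗ h_{w,y,z}) E_z`. -/
def ractB (c : Set W) (y : W) (w : ↥c) : Emod Γ c :=
  Finsupp.mapRange (fun a => (1 : A Γ) ⊗ₜ[ℤ] a) (by simp)
    ((d.bC.repr (d.C (w : W) * d.C y)).subtypeDomain (· ∈ c))

/-- The right action of `C_y` on `E`, extended `(A ⊗ A)`-linearly from the basis. -/
def ract (c : Set W) (y : W) (v : Emod Γ c) : Emod Γ c :=
  v.sum fun w t => t • d.ractB c y w

end KLData

end KL

open KL


/-! Since `u' ≤_D u` and `b'⁻¹ ≤_D b⁻¹`, we have `T_u = T_{u'} T_v` and `T_b = T_x T_{b'}` with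
`v = u'⁻¹ u`, `x = b b'⁻¹`, so it suffices to strip factors `T_s` (`s ∈ S`) one at a time from
either end of `g = T_{b'} T_{d'} T_{u'}`. Every product of standard basis elements has
coordinates whose leading coefficients in `ℤ[Γ]` are nonnegative. For such `g` and any `z`, the
coordinate of `g T_s` at the longer of `z, zs` is `g_z + ξ g_{zs}` or `g_z`, where
`ξ = q^{L(s)} - q^{-L(s)}`; the top terms of `g_z` and `ξ g_{zs}` cannot cancel, so the degree of
`α g_z` is at most that of the coordinate of `α g T_s`. Hence `α g T_s ∈ H_{<0}` forces
`α g ∈ H_{<0}`. -/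

namespace KL

section LinearOrder

variable {Γ : Type} [LinearOrder Γ] {a : A Γ} {m : Γ}

theorem coeff_ne_zero_of_adeg_eq (h : adeg a = m) : a.coeff m ≠ 0 :=
  Finsupp.mem_support_iff.mp (Finset.mem_of_max h)

theorem le_adeg_of_coeff_ne_zero (h : a.coeff m ≠ 0) : (m : WithBot Γ) ≤ adeg a :=
  Finset.le_max (Finsupp.mem_support_iff.mpr h)

theorem coeff_eq_zero_of_adeg_lt (h : adeg a < m) : a.coeff m = 0 := by
  by_contra hm
  exact (le_adeg_of_coeff_ne_zero hm).not_gt h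

theorem adeg_zero : adeg (0 : A Γ) = ⊥ := rfl

theorem exists_adeg_eq (ha : a ≠ 0) : ∃ m : Γ, adeg a = m := by
  obtain ⟨m, -, hm⟩ := AddMonoidAlgebra.exists_supDegree_mem_support WithBot.some ha
  exact ⟨m, hm⟩

def LeadingCoeffNonneg (a : A Γ) : Prop := ∀ m : Γ, adeg a = m → 0 ≤ a.coeff m

theorem leadingCoeffNonneg_zero : LeadingCoeffNonneg (0 : A Γ) := fun _ _ => le_rfl

theorem LeadingCoeffNonneg.coeff_nonneg_of_adeg_le (ha : LeadingCoeffNonneg a)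
    (h : adeg a ≤ m) : 0 ≤ a.coeff m := by
  rcases h.lt_or_eq with h | h
  · exact (coeff_eq_zero_of_adeg_lt h).ge
  · exact ha m h

end LinearOrder

variable {Γ : Type} [AddCommGroup Γ] [LinearOrder Γ] {a b : A Γ}

theorem leadingCoeffNonneg_one : LeadingCoeffNonneg (1 : A Γ) := by
  intro m _
  rw [AddMonoidAlgebra.one_def, AddMonoidAlgebra.coeff_single, Finsupp.single_apply]
  split_ifs <;> simp

namespace LeadingCoeffNonneg

theorem adeg_add_of_le (ha : LeadingCoeffNonneg a) (hb : LeadingCoeffNonneg b)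
    (hab : adeg a ≤ adeg b) : adeg (a + b) = adeg b := by
  rcases eq_or_ne b 0 with rfl | hb0
  · rw [add_zero, adeg_zero] at *
    exact le_bot_iff.mp hab
  obtain ⟨n, hn⟩ := exists_adeg_eq hb0
  refine le_antisymm (AddMonoidAlgebra.supDegree_add_le.trans (max_le hab le_rfl)) ?_
  rw [hn]
  refine le_adeg_of_coeff_ne_zero (ne_of_gt ?_)
  rw [AddMonoidAlgebra.coeff_add, Finsupp.add_apply]
  exact add_pos_of_nonneg_of_pos (ha.coeff_nonneg_of_adeg_le (hn ▸ hab))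
    ((hb n hn).lt_of_ne (coeff_ne_zero_of_adeg_eq hn).symm)

theorem adeg_add (ha : LeadingCoeffNonneg a) (hb : LeadingCoeffNonneg b) :
    adeg (a + b) = max (adeg a) (adeg b) := by
  rcases le_total (adeg a) (adeg b) with h | h
  · rw [max_eq_right h, ha.adeg_add_of_le hb h]
  · rw [max_eq_left h, add_comm, hb.adeg_add_of_le ha h]

theorem add (ha : LeadingCoeffNonneg a) (hb : LeadingCoeffNonneg b) :
    LeadingCoeffNonneg (a + b) := by
  intro m hm
  rw [ha.adeg_add hb] at hm
  rw [AddMonoidAlgebra.coeff_add, Finsupp.add_apply]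
  exact add_nonneg (ha.coeff_nonneg_of_adeg_le (hm ▸ le_max_left _ _))
    (hb.coeff_nonneg_of_adeg_le (hm ▸ le_max_right _ _))

end LeadingCoeffNonneg

variable [IsOrderedAddMonoid Γ]

theorem mem_Alt0_iff_adeg_lt_zero : a ∈ Alt0 Γ ↔ adeg a < 0 := by
  rw [adeg, Finset.max, Finset.sup_lt_iff (WithBot.bot_lt_coe 0)]
  simp [Alt0]

theorem coeff_mul_add_of_adeg_eq {m n : Γ} (ha : adeg a = m) (hb : adeg b = n) :
    (a * b).coeff (m + n) = a.coeff m * b.coeff n := by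
  refine AddMonoidAlgebra.coeff_mul_add_of_uniqueAdd fun x y hx hy hxy => ?_
  have hxm : x ≤ m := WithBot.coe_le_coe.mp (ha ▸ Finset.le_max hx)
  have hyn : y ≤ n := WithBot.coe_le_coe.mp (hb ▸ Finset.le_max hy)
  constructor
  · by_contra hne
    exact (add_lt_add_of_lt_of_le (lt_of_le_of_ne hxm hne) hyn).ne hxy
  · by_contra hne
    exact (add_lt_add_of_le_of_lt hxm (lt_of_le_of_ne hyn hne)).ne hxy

theorem adeg_mul (a b : A Γ) : adeg (a * b) = adeg a + adeg b := by
  rcases eq_or_ne a 0 with rfl | ha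
  · simp [adeg_zero]
  rcases eq_or_ne b 0 with rfl | hb
  · simp [adeg_zero]
  obtain ⟨m, hm⟩ := exists_adeg_eq ha
  obtain ⟨n, hn⟩ := exists_adeg_eq hb
  refine le_antisymm (AddMonoidAlgebra.supDegree_mul_le fun x y => WithBot.coe_add x y) ?_
  rw [hm, hn, ← WithBot.coe_add]
  refine le_adeg_of_coeff_ne_zero ?_
  rw [coeff_mul_add_of_adeg_eq hm hn]
  exact mul_ne_zero (coeff_ne_zero_of_adeg_eq hm) (coeff_ne_zero_of_adeg_eq hn)

theorem LeadingCoeffNonneg.mul (ha : LeadingCoeffNonneg a) (hb : LeadingCoeffNonneg b) :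
    LeadingCoeffNonneg (a * b) := by
  intro k hk
  rw [adeg_mul] at hk
  obtain ⟨m, n, hm, hn, rfl⟩ := WithBot.add_eq_coe.mp hk
  rw [coeff_mul_add_of_adeg_eq hm.symm hn.symm]
  exact mul_nonneg (ha m hm.symm) (hb n hn.symm)

theorem leadingCoeffNonneg_xi {γ : Γ} (hγ : 0 < γ) : LeadingCoeffNonneg (xi γ) := by
  have hcoeff : ∀ m, (xi γ).coeff m = (if γ = m then 1 else 0) - (if -γ = m then 1 else 0) := by
    intro m
    simp [xi, qe, AddMonoidAlgebra.coeff_single, Finsupp.single_apply]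
  intro m hm
  have hγm : γ ≤ m := WithBot.coe_le_coe.mp
    (hm ▸ le_adeg_of_coeff_ne_zero (by simp [hcoeff, (neg_lt_self hγ).ne]))
  rw [hcoeff, if_neg ((neg_lt_self hγ).trans_le hγm).ne]
  split_ifs <;> simp

theorem mul_mem_Alt0_of_mul_add_mem_Alt0 {α p q : A Γ} (hp : LeadingCoeffNonneg p)
    (hq : LeadingCoeffNonneg q) (h : α * (p + q) ∈ Alt0 Γ) : α * p ∈ Alt0 Γ := by
  rw [mem_Alt0_iff_adeg_lt_zero, adeg_mul, hp.adeg_add hq] at *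
  exact (add_le_add le_rfl (le_max_left _ _)).trans_lt h

end KL

namespace CoxeterSystem

variable {B W : Type} [Group W] {M : CoxeterMatrix B} (cs : CoxeterSystem M W)

theorem induction_mul_simple {P : W → Prop} (one : P 1)
    (mul_simple : ∀ w i, cs.length (w * cs.simple i) = cs.length w + 1 → P w →
      P (w * cs.simple i)) (w : W) : P w := by
  induction hn : cs.length w generalizing w with
  | zero => rwa [cs.length_eq_zero_iff.mp hn]
  | succ n ih =>
    obtain ⟨i, hi⟩ := cs.exists_rightDescent_of_ne_one (w := w) (by rintro rfl; simp at hn)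
    have hlen := cs.isRightDescent_iff.mp hi
    have hw : w * cs.simple i * cs.simple i = w := cs.simple_mul_simple_cancel_right i
    rw [← hw]
    exact mul_simple _ i (by rw [hw]; omega) (ih _ (by omega))

theorem induction_simple_mul {P : W → Prop} (one : P 1)
    (simple_mul : ∀ w i, cs.length (cs.simple i * w) = cs.length w + 1 → P w →
      P (cs.simple i * w)) (w : W) : P w := by
  simpa using cs.induction_mul_simple (P := fun w => P w⁻¹) (by simpa using one)
    (fun w i h hw => by
      simpa using simple_mul w⁻¹ i (by simpa [← cs.length_inv (cs.simple i * w⁻¹)] using h) hw) w⁻¹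

end CoxeterSystem

namespace KL.KLData

variable {B W : Type} [Group W] {M : CoxeterMatrix B} {Γ : Type}
  [AddCommGroup Γ] [LinearOrder Γ] [IsOrderedAddMonoid Γ] {H : Type} [Ring H] [Algebra (A Γ) H]
  (d : KLData M W Γ H)

@[simp]
theorem repr_T (w : W) : d.bT.repr (d.T w) = Finsupp.single w 1 := d.bT.repr_self w

theorem T_mul_T {w w' : W} (h : d.cs.length (w * w') = d.cs.length w + d.cs.length w') :
    d.T w * d.T w' = d.T (w * w') :=
  d.T_mul w w' h

theorem T_one : d.T 1 = 1 := by
  have hleft : LinearMap.mulLeft (A Γ) (d.T 1) = LinearMap.id :=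
    d.bT.ext fun w => by simpa [T] using d.T_mul 1 w (by simp)
  calc d.T 1 = d.T 1 * 1 := (mul_one _).symm
    _ = 1 := LinearMap.congr_fun hleft 1

theorem L_simple_pos (i : B) : 0 < d.L (d.cs.simple i) :=
  d.L_pos _ fun h => by simpa [h] using d.cs.length_simple i

theorem T_simple_mul_self (i : B) :
    d.T (d.cs.simple i) * d.T (d.cs.simple i) =
      1 + xi (d.L (d.cs.simple i)) • d.T (d.cs.simple i) := by
  set T := d.T (d.cs.simple i)
  set c := algebraMap (A Γ) H (qe (d.L (d.cs.simple i)))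
  set c' := algebraMap (A Γ) H (qe (-d.L (d.cs.simple i)))
  have hquad : (T + c') * (T - c) = 0 := d.T_quad i
  have hcomm : T * c - c * T = 0 := sub_eq_zero.mpr (Algebra.commutes _ _).symm
  have hinv : c' * c - 1 = 0 := by
    rw [sub_eq_zero, ← map_mul, qe, qe, AddMonoidAlgebra.single_mul_single, neg_add_cancel,
      one_mul, ← AddMonoidAlgebra.one_def, map_one]
  rw [Algebra.smul_def, xi, map_sub, ← sub_eq_zero]
  calc T * T - (1 + (c - c') * T) = (T + c') * (T - c) + (T * c - c * T) + (c' * c - 1) := by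
        noncomm_ring
    _ = 0 := by rw [hquad, hcomm, hinv, add_zero, add_zero]

/-- `f` acts on the standard basis as multiplication by `T_s` on one side does, `σ` being
multiplication by `s` on the same side and `ξ = q^{L(s)} - q^{-L(s)}`. -/
structure ActsLikeSimpleT (σ : W → W) (ξ : A Γ) (f : H →ₗ[A Γ] H) : Prop where
  involutive : Function.Involutive σ
  length_eq : ∀ z, d.cs.length (σ z) = d.cs.length z + 1 ∨ d.cs.length (σ z) + 1 = d.cs.length z
  apply_T : ∀ z, d.cs.length (σ z) = d.cs.length z + 1 → f (d.T z) = d.T (σ z)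
  apply_apply : ∀ x, f (f x) = x + ξ • f x
  xi_nonneg : LeadingCoeffNonneg ξ

def LeadingCoeffsNonneg (h : H) : Prop := ∀ z : W, LeadingCoeffNonneg (d.bT.repr h z)

theorem actsLikeSimpleT_mulRight (i : B) :
    d.ActsLikeSimpleT (· * d.cs.simple i) (xi (d.L (d.cs.simple i)))
      (LinearMap.mulRight (A Γ) (d.T (d.cs.simple i))) where
  involutive _ := d.cs.simple_mul_simple_cancel_right i
  length_eq w := d.cs.length_mul_simple w i
  apply_T _ hw := d.T_mul_T (by rw [hw, d.cs.length_simple])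
  apply_apply x := by simp [mul_assoc, T_simple_mul_self, mul_add]
  xi_nonneg := leadingCoeffNonneg_xi (d.L_simple_pos i)

theorem actsLikeSimpleT_mulLeft (i : B) :
    d.ActsLikeSimpleT (d.cs.simple i * ·) (xi (d.L (d.cs.simple i)))
      (LinearMap.mulLeft (A Γ) (d.T (d.cs.simple i))) where
  involutive _ := d.cs.simple_mul_simple_cancel_left i
  length_eq w := d.cs.length_simple_mul w i
  apply_T _ hw := d.T_mul_T (by rw [hw, d.cs.length_simple, add_comm])
  apply_apply x := by simp [← mul_assoc, T_simple_mul_self, add_mul]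
  xi_nonneg := leadingCoeffNonneg_xi (d.L_simple_pos i)

theorem leadingCoeffsNonneg_T (w : W) : d.LeadingCoeffsNonneg (d.T w) := by
  intro z
  rw [repr_T, Finsupp.single_apply]
  split_ifs
  exacts [leadingCoeffNonneg_one, leadingCoeffNonneg_zero]

variable {d}

namespace ActsLikeSimpleT

variable {σ : W → W} {ξ : A Γ} {f : H →ₗ[A Γ] H}

theorem apply_T_of_length_lt (hf : d.ActsLikeSimpleT σ ξ f) {z : W}
    (hz : d.cs.length (σ z) + 1 = d.cs.length z) : f (d.T z) = d.T (σ z) + ξ • d.T z := by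
  have hT : f (d.T (σ z)) = d.T z := by
    rw [hf.apply_T (σ z) (by rw [hf.involutive z]; omega), hf.involutive z]
  rw [← hT, hf.apply_apply, hT]

theorem repr_apply_of_length_gt (hf : d.ActsLikeSimpleT σ ξ f) (h : H) {y : W}
    (hy : d.cs.length (σ y) = d.cs.length y + 1) : d.bT.repr (f h) y = d.bT.repr h (σ y) := by
  suffices (d.bT.coord y).comp f = d.bT.coord (σ y) from LinearMap.congr_fun this h
  refine d.bT.ext fun z => ?_
  change d.bT.repr (f (d.T z)) y = d.bT.repr (d.T z) (σ y)
  have hzy : σ z = y ↔ z = σ y := hf.involutive.eq_iff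
  rcases hf.length_eq z with hz | hz
  · simp [hf.apply_T z hz, Finsupp.single_apply, hzy]
  · have hne : z ≠ y := by rintro rfl; omega
    simp [hf.apply_T_of_length_lt hz, Finsupp.single_apply, hzy, hne]

theorem repr_apply_of_length_lt (hf : d.ActsLikeSimpleT σ ξ f) (h : H) {y : W}
    (hy : d.cs.length (σ y) + 1 = d.cs.length y) :
    d.bT.repr (f h) y = d.bT.repr h (σ y) + ξ * d.bT.repr h y := by
  have hσy : d.cs.length (σ (σ y)) = d.cs.length (σ y) + 1 := by rw [hf.involutive y]; omega
  have h1 := hf.repr_apply_of_length_gt (f h) hσy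
  have h2 := hf.repr_apply_of_length_gt h hσy
  rw [hf.involutive y] at h1 h2
  rw [← h1, hf.apply_apply, map_add, map_smul, Finsupp.add_apply, Finsupp.smul_apply, smul_eq_mul,
    h2]

theorem leadingCoeffsNonneg_apply (hf : d.ActsLikeSimpleT σ ξ f) {g : H}
    (hg : d.LeadingCoeffsNonneg g) : d.LeadingCoeffsNonneg (f g) := by
  intro y
  rcases hf.length_eq y with hy | hy
  · rw [hf.repr_apply_of_length_gt g hy]
    exact hg _
  · rw [hf.repr_apply_of_length_lt g hy]
    exact (hg _).add (hf.xi_nonneg.mul (hg y))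

theorem smul_mem_Hlt0_of_smul_apply (hf : d.ActsLikeSimpleT σ ξ f) {g : H}
    (hg : d.LeadingCoeffsNonneg g) {α : A Γ} (h : α • f g ∈ d.Hlt0) : α • g ∈ d.Hlt0 := by
  intro z
  have hz := h (σ z)
  rw [map_smul, Finsupp.smul_apply, smul_eq_mul] at hz ⊢
  rcases hf.length_eq z with hlen | hlen
  · rw [hf.repr_apply_of_length_lt g (by rw [hf.involutive z]; omega), hf.involutive z] at hz
    exact mul_mem_Alt0_of_mul_add_mem_Alt0 (hg z) (hf.xi_nonneg.mul (hg _)) hz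
  · rwa [hf.repr_apply_of_length_gt g (by rw [hf.involutive z]; omega), hf.involutive z] at hz

end ActsLikeSimpleT

theorem LeadingCoeffsNonneg.mul_T {g : H} (hg : d.LeadingCoeffsNonneg g) (w : W) :
    d.LeadingCoeffsNonneg (g * d.T w) := by
  induction w using d.cs.induction_mul_simple with
  | one => rwa [T_one, mul_one]
  | mul_simple w i hw ih =>
    rw [← d.T_mul_T (by rw [hw, d.cs.length_simple]), ← mul_assoc]
    exact (d.actsLikeSimpleT_mulRight i).leadingCoeffsNonneg_apply ih

theorem LeadingCoeffsNonneg.T_mul {g : H} (hg : d.LeadingCoeffsNonneg g) (w : W) :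
    d.LeadingCoeffsNonneg (d.T w * g) := by
  induction w using d.cs.induction_simple_mul with
  | one => rwa [T_one, one_mul]
  | simple_mul w i hw ih =>
    rw [← d.T_mul_T (by rw [hw, d.cs.length_simple, add_comm]), mul_assoc]
    exact (d.actsLikeSimpleT_mulLeft i).leadingCoeffsNonneg_apply ih

theorem smul_mem_Hlt0_of_smul_mul_T {g : H} (hg : d.LeadingCoeffsNonneg g) {α : A Γ} (v : W)
    (h : α • (g * d.T v) ∈ d.Hlt0) : α • g ∈ d.Hlt0 := by
  induction v using d.cs.induction_mul_simple with
  | one => rwa [T_one, mul_one] at h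
  | mul_simple w i hw ih =>
    rw [← d.T_mul_T (by rw [hw, d.cs.length_simple]), ← mul_assoc] at h
    exact ih ((d.actsLikeSimpleT_mulRight i).smul_mem_Hlt0_of_smul_apply (hg.mul_T w) h)

theorem smul_mem_Hlt0_of_smul_T_mul {g : H} (hg : d.LeadingCoeffsNonneg g) {α : A Γ} (x : W)
    (h : α • (d.T x * g) ∈ d.Hlt0) : α • g ∈ d.Hlt0 := by
  induction x using d.cs.induction_simple_mul with
  | one => rwa [T_one, one_mul] at h
  | simple_mul w i hw ih =>
    rw [← d.T_mul_T (by rw [hw, d.cs.length_simple, add_comm]), mul_assoc] at h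
    exact ih ((d.actsLikeSimpleT_mulLeft i).smul_mem_Hlt0_of_smul_apply (hg.T_mul w) h)

variable (d) {x y : W}

theorem T_mul_T_inv_mul_of_dufloLE (h : d.dufloLE x y) : d.T x * d.T (x⁻¹ * y) = d.T y := by
  rw [d.T_mul_T (by rw [mul_inv_cancel_left]; exact h.symm), mul_inv_cancel_left]

theorem T_mul_inv_mul_T_of_dufloLE_inv (h : d.dufloLE x⁻¹ y⁻¹) :
    d.T (y * x⁻¹) * d.T x = d.T y := by
  have hlen : d.cs.length x + d.cs.length (y * x⁻¹) = d.cs.length y := by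
    rw [← d.cs.length_inv (y * x⁻¹), mul_inv_rev, inv_inv]
    simpa [dufloLE, d.cs.length_inv] using h
  rw [d.T_mul_T (by rw [inv_mul_cancel_right]; omega), inv_mul_cancel_right]

end KL.KLData

/-- if `α T_b T_{d'} T_u ∈ H_{<0}`, then
`α T_{b'} T_{d'} T_{u'} ∈ H_{<0}` whenever `b'⁻¹ ≤_D b⁻¹` and `u' ≤_D u`
(Duflo order). -/
theorem statement_12 {B W : Type} [Group W] {M : CoxeterMatrix B} {Γ : Type}
    [AddCommGroup Γ] [LinearOrder Γ] [IsOrderedAddMonoid Γ] {H : Type} [Ring H] [Algebra (A Γ) H]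
    (d : KLData M W Γ H) (b d' u : W) (α : A Γ)
    (h : α • (d.T b * d.T d' * d.T u) ∈ d.Hlt0) :
    ∀ b' u' : W, d.dufloLE b'⁻¹ b⁻¹ → d.dufloLE u' u →
      α • (d.T b' * d.T d' * d.T u') ∈ d.Hlt0 := by
  intro b' u' hb hu
  have hu' : α • (d.T b * d.T d' * d.T u') ∈ d.Hlt0 := by
    refine d.smul_mem_Hlt0_of_smul_mul_T (((d.leadingCoeffsNonneg_T b).mul_T d').mul_T u')
      (u'⁻¹ * u) ?_
    rwa [mul_assoc _ (d.T u'), d.T_mul_T_inv_mul_of_dufloLE hu]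
  refine d.smul_mem_Hlt0_of_smul_T_mul (((d.leadingCoeffsNonneg_T b').mul_T d').mul_T u')
    (b * b'⁻¹) ?_
  rwa [← mul_assoc, ← mul_assoc, d.T_mul_inv_mul_T_of_dufloLE_inv hb]
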